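/- arXiv:2603.28154 — 2 statements merged into one kernel-verified Lean document; each statement's English description precedes it below -/
import Mathlib

section
/- Let λ_n(a) be defined by the power series expansion (ax;q²)_∞ / (x;q)_∞ = Σ_{n≥0} λ_n(a) x^n. Then λ_n(a) = ((−a)^n q^{n(n−1)} / (q²;q²)_n) · Σ_{k=0}^n ((q^{−n};q)_k (−q^{−n};q)_k / (q;q)_k) (q²/a)^k. -/
open Finset

noncomputable def qp (x q : ℂ) (n : ℕ) : ℂ := ∏ j ∈ Finset.range n, (1 - x * q ^ j)

noncomputable def qpinf (x q : ℂ) : ℂ := ∏' j : ℕ, (1 - x * q ^ j)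

noncomputable def qbinom (q : ℂ) (n k : ℕ) : ℂ := qp q q n / (qp q q k * qp q q (n - k))

noncomputable def RS (a b q : ℂ) (n : ℕ) : ℂ :=
  ∑ k ∈ Finset.range (n + 1), qbinom q n k * a ^ k * b ^ (n - k)

noncomputable def Tsum (q : ℂ) (r n s : ℕ) : ℂ :=
  ∑ k ∈ Finset.range (n + 1),
    qp (q ^ (-(2 * (n : ℤ)))) (q ^ 2) k / (qp q q k * qp (q ^ ((1 : ℤ) + r - n)) q k)
      * q ^ ((2 - (s : ℤ)) * k)

noncomputable def gam (q : ℂ) (n : ℕ) : ℂ :=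
  ∑ k ∈ Finset.range (n + 1), qbinom q n k * q ^ (k ^ 2) / qp (-q) q k

open Filter Topology FormalMultilinearSeries
open scoped ENNReal

/-!
Both infinite products are expanded by Euler's identities
`(y;p)_∞ = ∑ₘ (-1)^m p^(m choose 2) yᵐ / (p;p)ₘ` and `1/(x;q)_∞ = ∑ⱼ xʲ / (q;q)ⱼ`.
Each series `F` satisfies a functional equation, `F y = (1 - y) F (p y)` resp.
`F (q x) = (1 - x) F x`, read off from the two-term recurrence of its coefficients; iterating it
`N` times produces `(y;p)_N` and letting `N → ∞` (continuity at `0`, `F 0 = 1`) gives the product.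
The Cauchy product of the two series gives
`λₙ = ∑ₖ (-1)^(n-k) q^((n-k)(n-k-1)) a^(n-k) / ((q²;q²)_(n-k) (q;q)ₖ)`, the coefficients being
determined by the function near `0`. Finally
`(q⁻ⁿ;q)ₖ (-q⁻ⁿ;q)ₖ = (q⁻²ⁿ;q²)ₖ = (-q⁻²ⁿ)ᵏ q^(k(k-1)) (q²;q²)ₙ / (q²;q²)_(n-k)`
turns each term into the one in the statement.
-/

section NormedField

variable {𝕜 : Type*} [NontriviallyNormedField 𝕜]

lemma one_sub_ne_zero_of_norm_lt_one {z : 𝕜} (hz : ‖z‖ < 1) : 1 - z ≠ 0 :=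
  sub_ne_zero.2 fun h => by simp [← h] at hz

lemma one_sub_pow_ne_zero {p : 𝕜} (hp : ‖p‖ < 1) {m : ℕ} (hm : m ≠ 0) : 1 - p ^ m ≠ 0 :=
  one_sub_ne_zero_of_norm_lt_one (by rw [norm_pow]; exact pow_lt_one₀ (norm_nonneg p) hp hm)

lemma ContinuousAt.tendsto_comp_pow_mul {E : Type*} [TopologicalSpace E] {F : 𝕜 → E}
    (hF : ContinuousAt F 0) {q : 𝕜} (hq : ‖q‖ < 1) (x : 𝕜) :
    Tendsto (fun N : ℕ => F (q ^ N * x)) atTop (𝓝 (F 0)) := by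
  refine hF.tendsto.comp ?_
  simpa using (tendsto_pow_atTop_nhds_zero_of_norm_lt_one hq).mul_const x

lemma tsum_mul_zero_pow (c : ℕ → 𝕜) : ∑' n, c n * (0 : 𝕜) ^ n = c 0 := by
  rw [tsum_eq_single 0 fun n hn => by simp [hn]]
  simp

lemma tsum_mul_pow_sub_tsum_mul_mul_pow {c : ℕ → 𝕜} {p x : 𝕜}
    (h₁ : Summable fun m => c m * x ^ m) (h₂ : Summable fun m => c m * (p * x) ^ m) :
    ∑' m, c m * x ^ m - ∑' m, c m * (p * x) ^ m
      = x * ∑' m, c (m + 1) * (1 - p ^ (m + 1)) * x ^ m := by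
  have hdiff : Summable fun m => c m * (1 - p ^ m) * x ^ m :=
    (h₁.sub h₂).congr fun m => by ring
  rw [← h₁.tsum_sub h₂, ← tsum_mul_left]
  calc ∑' m, (c m * x ^ m - c m * (p * x) ^ m) = ∑' m, c m * (1 - p ^ m) * x ^ m :=
        tsum_congr fun m => by ring
    _ = _ := by
        rw [hdiff.tsum_eq_zero_add]
        simp only [pow_zero, sub_self, mul_zero, zero_mul, zero_add]
        exact tsum_congr fun m => by ring

lemma summable_norm_mul_pow_of_lt_radius {c : ℕ → 𝕜} {x : 𝕜}
    (hx : ‖x‖ₑ < (ofScalars 𝕜 c).radius) : Summable fun n => ‖c n * x ^ n‖ := by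
  simpa [ofScalars_apply_eq, mul_comm] using
    (ofScalars 𝕜 c).summable_norm_apply (mem_eball_zero_iff.2 hx)

lemma le_radius_ofScalars_of_summable {c : ℕ → 𝕜} {x : 𝕜}
    (hc : Summable fun n => c n * x ^ n) : (‖x‖₊ : ℝ≥0∞) ≤ (ofScalars 𝕜 c).radius :=
  (ofScalars 𝕜 c).le_radius_of_tendsto (l := 0) (by
    simpa [ofScalars_norm] using hc.tendsto_atTop_zero.norm)

lemma continuousAt_tsum_mul_pow [CompleteSpace 𝕜] {c : ℕ → 𝕜}
    (hc : 0 < (ofScalars 𝕜 c).radius) : ContinuousAt (fun x => ∑' n, c n * x ^ n) 0 := by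
  have := ((ofScalars 𝕜 c).hasFPowerSeriesOnBall hc).hasFPowerSeriesAt.continuousAt
  rwa [← ofScalarsSum, ofScalarsSum_eq_tsum] at this

/-- The hypothesis compares `tsum`s, which are `0` off summability: `d 0 ≠ 0` keeps the right-hand
side away from `0` near `0`, and this forces the series of `c` to converge there. -/
lemma eq_of_tsum_mul_pow_eq [CompleteSpace 𝕜] {c d : ℕ → 𝕜}
    (hd : 0 < (ofScalars 𝕜 d).radius) (hd₀ : d 0 ≠ 0)
    (h : ∀ᶠ x in 𝓝 0, ∑' n, c n * x ^ n = ∑' n, d n * x ^ n) : c = d := by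
  have hD : ∀ᶠ x in 𝓝 0, ∑' n, d n * x ^ n ≠ 0 :=
    (continuousAt_tsum_mul_pow hd).eventually_ne (by rwa [tsum_mul_zero_pow])
  have hsum : ∀ᶠ x in 𝓝 (0 : 𝕜), Summable fun n => c n * x ^ n := by
    filter_upwards [h, hD] with x hx hx'
    by_contra hns
    rw [tsum_eq_zero_of_not_summable hns] at hx
    exact hx' hx.symm
  obtain ⟨x₀, hx₀, hx₀_ne⟩ :=
    ((hsum.filter_mono nhdsWithin_le_nhds).and eventually_mem_nhdsWithin).exists
      (f := 𝓝[≠] (0 : 𝕜))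
  have hc : 0 < (ofScalars 𝕜 c).radius :=
    lt_of_lt_of_le (by simpa using hx₀_ne) (le_radius_ofScalars_of_summable hx₀)
  refine ofScalars_series_injective 𝕜 𝕜
    (HasFPowerSeriesAt.eq_formalMultilinearSeries_of_eventually
      ((ofScalars 𝕜 c).hasFPowerSeriesOnBall hc).hasFPowerSeriesAt
      ((ofScalars 𝕜 d).hasFPowerSeriesOnBall hd).hasFPowerSeriesAt ?_)
  rw [← ofScalarsSum, ← ofScalarsSum, ofScalarsSum_eq_tsum, ofScalarsSum_eq_tsum]
  exact h

end NormedField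

lemma qp_succ (x q : ℂ) (n : ℕ) : qp x q (n + 1) = qp x q n * (1 - x * q ^ n) :=
  prod_range_succ _ n

lemma qp_ne_zero {x q : ℂ} (hx : ‖x‖ < 1) (hq : ‖q‖ ≤ 1) (n : ℕ) : qp x q n ≠ 0 :=
  prod_ne_zero_iff.2 fun j _ => one_sub_ne_zero_of_norm_lt_one <| by
    rw [norm_mul, norm_pow]
    exact mul_lt_one_of_nonneg_of_lt_one_left (norm_nonneg x) hx (pow_le_one₀ (norm_nonneg q) hq)

lemma qp_mul_qp_neg (u q : ℂ) (k : ℕ) : qp u q k * qp (-u) q k = qp (u ^ 2) (q ^ 2) k := by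
  simp only [qp, ← prod_mul_distrib]
  exact prod_congr rfl fun j _ => by ring

lemma qp_mul_qp_self_sub {u p : ℂ} {n k : ℕ} (hu : u * p ^ n = 1) (hk : k ≤ n) :
    qp u p k * qp p p (n - k) = (-u) ^ k * p ^ k.choose 2 * qp p p n := by
  induction k with
  | zero => simp [qp]
  | succ k ih =>
    have hsplit : qp p p (n - k) = qp p p (n - (k + 1)) * (1 - p ^ (n - k)) := by
      rw [show n - k = n - (k + 1) + 1 by omega, qp_succ, ← pow_succ']
    have hpow : p ^ k * p ^ (n - k) = p ^ n := by
      rw [← pow_add, Nat.add_sub_cancel' (by omega)]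
    calc qp u p (k + 1) * qp p p (n - (k + 1))
        = -u * p ^ k * (qp u p k * qp p p (n - k)) := by
          rw [qp_succ, hsplit]
          linear_combination (-(qp u p k * qp p p (n - (k + 1)))) * (hu + u * hpow)
      _ = (-u) ^ (k + 1) * p ^ (k + 1).choose 2 * qp p p n := by
          rw [ih (by omega), Nat.choose_succ_succ', Nat.choose_one_right]; ring

lemma tendsto_qp_qpinf {q : ℂ} (hq : ‖q‖ < 1) (x : ℂ) :
    Tendsto (qp x q) atTop (𝓝 (qpinf x q)) := by
  have hsum : Summable fun j : ℕ => -(x * q ^ j) :=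
    ((summable_geometric_of_norm_lt_one hq).mul_left x).neg
  have hmul : Multipliable fun j : ℕ => 1 - x * q ^ j := by
    simpa [sub_eq_add_neg] using Complex.multipliable_one_add_of_summable hsum
  exact hmul.hasProd.tendsto_prod_nat

noncomputable def eulerCoeff (p : ℂ) (m : ℕ) : ℂ := (-1) ^ m * p ^ m.choose 2 / qp p p m

lemma eulerCoeff_ne_zero {p : ℂ} (hp₀ : p ≠ 0) (hp : ‖p‖ < 1) (m : ℕ) : eulerCoeff p m ≠ 0 :=
  div_ne_zero (by simp [hp₀]) (qp_ne_zero hp hp.le m)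

lemma eulerCoeff_succ_mul {p : ℂ} (hp : ‖p‖ < 1) (m : ℕ) :
    eulerCoeff p (m + 1) * (1 - p ^ (m + 1)) = -p ^ m * eulerCoeff p m := by
  have h₁ := qp_ne_zero hp hp.le m
  have h₂ := one_sub_pow_ne_zero hp m.succ_ne_zero
  simp only [eulerCoeff, qp_succ, ← pow_succ', Nat.choose_succ_succ', Nat.choose_one_right]
  field_simp
  ring

lemma radius_ofScalars_eulerCoeff {p : ℂ} (hp₀ : p ≠ 0) (hp : ‖p‖ < 1) :
    (ofScalars ℂ (eulerCoeff p)).radius = ⊤ := by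
  refine ofScalars_radius_eq_top_of_tendsto ℂ _
    (Eventually.of_forall (eulerCoeff_ne_zero hp₀ hp)) ?_
  have hpow := tendsto_pow_atTop_nhds_zero_of_norm_lt_one hp
  have hratio : Tendsto (fun m : ℕ => p ^ m / (1 - p ^ (m + 1))) atTop (𝓝 (0 / (1 - 0))) :=
    hpow.div (tendsto_const_nhds.sub (hpow.comp (tendsto_add_atTop_nat 1))) (by simp)
  refine Tendsto.congr (fun m => ?_) (by simpa using hratio.norm)
  rw [div_eq_div_iff (norm_ne_zero_iff.2 (one_sub_pow_ne_zero hp m.succ_ne_zero))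
      (norm_ne_zero_iff.2 (eulerCoeff_ne_zero hp₀ hp m)),
    ← norm_pow, ← norm_mul, ← norm_mul, mul_comm, eulerCoeff_succ_mul hp, norm_mul, norm_mul,
    norm_neg, mul_comm]

lemma summable_norm_eulerCoeff_mul_pow {p : ℂ} (hp₀ : p ≠ 0) (hp : ‖p‖ < 1) (y : ℂ) :
    Summable fun m => ‖eulerCoeff p m * y ^ m‖ :=
  summable_norm_mul_pow_of_lt_radius (by
    rw [radius_ofScalars_eulerCoeff hp₀ hp]; exact enorm_lt_top)

lemma tsum_eulerCoeff_eq_one_sub_mul {p : ℂ} (hp₀ : p ≠ 0) (hp : ‖p‖ < 1) (y : ℂ) :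
    ∑' m, eulerCoeff p m * y ^ m = (1 - y) * ∑' m, eulerCoeff p m * (p * y) ^ m := by
  have key := tsum_mul_pow_sub_tsum_mul_mul_pow
    (summable_norm_eulerCoeff_mul_pow hp₀ hp y).of_norm
    (summable_norm_eulerCoeff_mul_pow hp₀ hp (p * y)).of_norm
  have hrec (m : ℕ) : eulerCoeff p (m + 1) * (1 - p ^ (m + 1)) * y ^ m
      = -(eulerCoeff p m * (p * y) ^ m) := by
    rw [eulerCoeff_succ_mul hp]
    ring
  rw [tsum_congr hrec, tsum_neg] at key
  linear_combination key

lemma qpinf_eq_tsum_eulerCoeff {p : ℂ} (hp₀ : p ≠ 0) (hp : ‖p‖ < 1) (y : ℂ) :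
    qpinf y p = ∑' m, eulerCoeff p m * y ^ m := by
  set F : ℂ → ℂ := fun z => ∑' m, eulerCoeff p m * z ^ m
  have hF_eq (z : ℂ) : F z = (1 - z) * F (p * z) := tsum_eulerCoeff_eq_one_sub_mul hp₀ hp z
  have hiter (N : ℕ) : F y = qp y p N * F (p ^ N * y) := by
    induction N with
    | zero => simp [qp]
    | succ N ih =>
      rw [ih, hF_eq (p ^ N * y), qp_succ, pow_succ', mul_assoc p]
      ring
  have hF : ContinuousAt F 0 :=
    continuousAt_tsum_mul_pow (by simp [radius_ofScalars_eulerCoeff hp₀ hp])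
  have hlim := (tendsto_qp_qpinf hp y).mul (hF.tendsto_comp_pow_mul hp y)
  rw [← funext hiter] at hlim
  simpa [F, tsum_mul_zero_pow, eulerCoeff, qp] using tendsto_nhds_unique hlim tendsto_const_nhds

lemma inv_qp_succ (q : ℂ) (j : ℕ) :
    (qp q q (j + 1))⁻¹ = (qp q q j)⁻¹ * (1 - q ^ (j + 1))⁻¹ := by
  rw [qp_succ, ← pow_succ', mul_inv]

lemma radius_ofScalars_inv_qp {q : ℂ} (hq : ‖q‖ < 1) :
    (ofScalars ℂ fun j => (qp q q j)⁻¹).radius = 1 := by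
  have hpow := tendsto_pow_atTop_nhds_zero_of_norm_lt_one hq
  have hratio : Tendsto (fun j : ℕ => (1 - q ^ (j + 1))⁻¹) atTop (𝓝 (1 - 0)⁻¹) :=
    (tendsto_const_nhds.sub (hpow.comp (tendsto_add_atTop_nat 1))).inv₀ (by simp)
  have := ofScalars_radius_eq_inv_of_tendsto ℂ (fun j => (qp q q j)⁻¹) one_ne_zero
    (Tendsto.congr (fun j => ?_) (by simpa using hratio.norm))
  · simpa using this
  have hj : ‖(qp q q j)⁻¹‖ ≠ 0 := by simpa using qp_ne_zero hq hq.le j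
  rw [Nat.succ_eq_add_one, inv_qp_succ, norm_mul, mul_div_cancel_left₀ _ hj, norm_inv]

lemma summable_norm_inv_qp_mul_pow {q : ℂ} (hq : ‖q‖ < 1) {x : ℂ} (hx : ‖x‖ < 1) :
    Summable fun j => ‖(qp q q j)⁻¹ * x ^ j‖ :=
  summable_norm_mul_pow_of_lt_radius (c := fun j => (qp q q j)⁻¹) (by
    rwa [radius_ofScalars_inv_qp hq, ← ofReal_norm, ENNReal.ofReal_lt_one])

lemma tsum_inv_qp_mul_eq_one_sub_mul {q : ℂ} (hq : ‖q‖ < 1) {x : ℂ} (hx : ‖x‖ < 1) :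
    ∑' j, (qp q q j)⁻¹ * (q * x) ^ j = (1 - x) * ∑' j, (qp q q j)⁻¹ * x ^ j := by
  have hqx : ‖q * x‖ < 1 := by
    rw [norm_mul]; exact mul_lt_one_of_nonneg_of_lt_one_left (norm_nonneg q) hq hx.le
  have key := tsum_mul_pow_sub_tsum_mul_mul_pow
    (summable_norm_inv_qp_mul_pow hq hx).of_norm (summable_norm_inv_qp_mul_pow hq hqx).of_norm
  have hrec (j : ℕ) :
      (qp q q (j + 1))⁻¹ * (1 - q ^ (j + 1)) * x ^ j = (qp q q j)⁻¹ * x ^ j := by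
    rw [inv_qp_succ, mul_assoc _ _ (1 - _),
      inv_mul_cancel₀ (one_sub_pow_ne_zero hq j.succ_ne_zero), mul_one]
  rw [tsum_congr hrec] at key
  linear_combination -key

lemma qpinf_mul_tsum_inv_qp {q : ℂ} (hq : ‖q‖ < 1) {x : ℂ} (hx : ‖x‖ < 1) :
    qpinf x q * ∑' j, (qp q q j)⁻¹ * x ^ j = 1 := by
  set G : ℂ → ℂ := fun z => ∑' j, (qp q q j)⁻¹ * z ^ j
  have hG_eq {z : ℂ} (hz : ‖z‖ < 1) : G (q * z) = (1 - z) * G z :=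
    tsum_inv_qp_mul_eq_one_sub_mul hq hz
  have hiter (N : ℕ) : G (q ^ N * x) = qp x q N * G x := by
    induction N with
    | zero => simp [qp]
    | succ N ih =>
      have hN : ‖q ^ N * x‖ < 1 := by
        rw [norm_mul, norm_pow]
        exact mul_lt_one_of_nonneg_of_lt_one_right (pow_le_one₀ (norm_nonneg q) hq.le)
          (norm_nonneg x) hx
      rw [pow_succ', mul_assoc, hG_eq hN, ih, qp_succ]
      ring
  have hG : ContinuousAt G 0 :=
    continuousAt_tsum_mul_pow (by simp [radius_ofScalars_inv_qp hq])
  have hlim := hG.tendsto_comp_pow_mul hq x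
  rw [funext hiter] at hlim
  simpa [G, tsum_mul_zero_pow, qp] using
    tendsto_nhds_unique ((tendsto_qp_qpinf hq x).mul_const (G x)) hlim

noncomputable def quotientCoeff (q a : ℂ) (n : ℕ) : ℂ :=
  ∑ k ∈ range (n + 1), eulerCoeff (q ^ 2) (n - k) * a ^ (n - k) * (qp q q k)⁻¹

lemma hasSum_quotientCoeff {q : ℂ} (hq₀ : q ≠ 0) (hq : ‖q‖ < 1) (a : ℂ) {x : ℂ}
    (hx : ‖x‖ < 1) :
    HasSum (fun n => quotientCoeff q a n * x ^ n) (qpinf (a * x) (q ^ 2) / qpinf x q) := by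
  have hq2 : ‖q ^ 2‖ < 1 := by rw [norm_pow]; exact pow_lt_one₀ (norm_nonneg q) hq two_ne_zero
  have hf := summable_norm_inv_qp_mul_pow hq hx
  have hg := summable_norm_eulerCoeff_mul_pow (pow_ne_zero 2 hq₀) hq2 (a * x)
  have hterm (n : ℕ) : ∑ k ∈ range (n + 1),
      (qp q q k)⁻¹ * x ^ k * (eulerCoeff (q ^ 2) (n - k) * (a * x) ^ (n - k))
        = quotientCoeff q a n * x ^ n := by
    rw [quotientCoeff, sum_mul]
    refine sum_congr rfl fun k hk => ?_
    rw [mul_pow, ← pow_mul_pow_sub x (Nat.le_of_lt_succ (mem_range.1 hk))]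
    ring
  have hsum := (summable_norm_sum_mul_range_of_summable_norm hf hg).of_norm
  rw [div_eq_mul_inv, ← eq_inv_of_mul_eq_one_right (qpinf_mul_tsum_inv_qp hq hx),
    qpinf_eq_tsum_eulerCoeff (pow_ne_zero 2 hq₀) hq2, mul_comm,
    tsum_mul_tsum_eq_tsum_sum_range_of_summable_norm hf hg]
  simp only [hterm] at hsum ⊢
  exact hsum.hasSum

lemma choose_two_add_add (m k : ℕ) :
    (m + k).choose 2 + k.choose 2 + k = m.choose 2 + (m + k) * k := by
  induction k with
  | zero => simp
  | succ k ih =>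
    show (m + k + 1).choose 2 + (k + 1).choose 2 + (k + 1) = m.choose 2 + (m + k + 1) * (k + 1)
    rw [Nat.choose_succ_succ', Nat.choose_succ_succ', Nat.choose_one_right, Nat.choose_one_right]
    nlinarith [ih]

lemma sq_pow_choose_two (q : ℂ) (n : ℕ) : (q ^ 2) ^ n.choose 2 = q ^ (n * (n - 1)) := by
  rw [← pow_mul, Nat.choose_two_right, Nat.mul_div_cancel' (Nat.even_mul_pred_self n).two_dvd]

lemma eulerCoeff_mul_pow_eq {p a u : ℂ} (hp : ‖p‖ < 1) (ha : a ≠ 0) {n k : ℕ}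
    (hu : u * p ^ n = 1) (hk : k ≤ n) :
    eulerCoeff p (n - k) * a ^ (n - k)
      = (-a) ^ n * p ^ n.choose 2 / qp p p n * (qp u p k * (p / a) ^ k) := by
  obtain ⟨m, rfl⟩ := Nat.exists_eq_add_of_le' hk
  have hqp := qp_mul_qp_self_sub hu hk
  rw [Nat.add_sub_cancel] at hqp ⊢
  have hP := qp_ne_zero hp hp.le m
  have hP' := qp_ne_zero hp hp.le (m + k)
  have hpow : p ^ (m + k).choose 2 * p ^ k.choose 2 * p ^ k
      = p ^ m.choose 2 * (p ^ (m + k)) ^ k := by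
    rw [← pow_add, ← pow_add, ← pow_mul, ← pow_add, choose_two_add_add]
  have hsign : (-a) ^ (m + k) * (-u) ^ k * (p / a) ^ k = (-1) ^ m * a ^ m * (u * p) ^ k :=
    calc (-a) ^ (m + k) * (-u) ^ k * (p / a) ^ k
        = (-1) ^ m * a ^ m * (-a * -u * (p / a)) ^ k := by
          rw [mul_pow, mul_pow, pow_add, neg_pow a m]; ring
      _ = (-1) ^ m * a ^ m * (u * p) ^ k := by congr 2; field_simp
  have hu' : u ^ k * (p ^ (m + k)) ^ k = 1 := by rw [← mul_pow, hu, one_pow]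
  rw [eq_div_of_mul_eq hP hqp, eulerCoeff]
  field_simp
  linear_combination (-(p ^ (m + k).choose 2 * p ^ k.choose 2)) * hsign
    - ((-1) ^ m * a ^ m * u ^ k) * hpow - ((-1) ^ m * p ^ m.choose 2 * a ^ m) * hu'

theorem stmt1 (q a : ℂ) (hq0 : q ≠ 0) (hq : ‖q‖ < 1) (ha : a ≠ 0)
    (lam : ℕ → ℂ)
    (hlam : ∀ x : ℂ, ‖x‖ < 1 →
      qpinf (a * x) (q ^ 2) / qpinf x q = ∑' n : ℕ, lam n * x ^ n)
    (n : ℕ) :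
    lam n = (-a) ^ n * q ^ (n * (n - 1)) / qp (q ^ 2) (q ^ 2) n *
      ∑ k ∈ Finset.range (n + 1),
        qp (q ^ (-(n : ℤ))) q k * qp (-(q ^ (-(n : ℤ)))) q k / qp q q k * (q ^ 2 / a) ^ k := by
  have hcoeff : lam = quotientCoeff q a := by
    refine eq_of_tsum_mul_pow_eq ?_ (by simp [quotientCoeff, eulerCoeff, qp]) ?_
    · have hs := (hasSum_quotientCoeff hq0 hq a (x := 1 / 2) (by norm_num)).summable
      exact lt_of_lt_of_le (by norm_num) (le_radius_ofScalars_of_summable hs)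
    · filter_upwards [Metric.ball_mem_nhds (0 : ℂ) one_pos] with x hx
      rw [mem_ball_zero_iff] at hx
      rw [← hlam x hx, (hasSum_quotientCoeff hq0 hq a hx).tsum_eq]
  have hq2 : ‖q ^ 2‖ < 1 := by rw [norm_pow]; exact pow_lt_one₀ (norm_nonneg q) hq two_ne_zero
  have hu : (q ^ (-(n : ℤ))) ^ 2 * (q ^ 2) ^ n = 1 := by
    rw [zpow_neg, zpow_natCast, inv_pow, ← pow_mul, ← pow_mul, mul_comm n 2,
      inv_mul_cancel₀ (pow_ne_zero _ hq0)]
  rw [hcoeff, quotientCoeff, ← sq_pow_choose_two, mul_sum]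
  refine sum_congr rfl fun k hk => ?_
  rw [qp_mul_qp_neg, eulerCoeff_mul_pow_eq hq2 ha hu (Nat.le_of_lt_succ (mem_range.1 hk))]
  ring
end

section
/- For every nonnegative integer n: Σ_{k=0}^n q^{k²} / (((q;q)_k)² (q;q)_{n−k}) = 1/((q;q)_n)². -/
open Finset

/-! Splitting each `[n+1, k]` by the q-Pascal rule `[n+1, k] = q^k [n, k] + [n, k-1]` shows that
`S n m := ∑ₖ [n, k] q^(k² + m k) / (q;q)_(k+m)` satisfies `S (n+1) m = S n (m+1)`, since the two
resulting terms recombine as `(1 - q^(k+m+1)) + q^(k+m+1) = 1`. Hence `S n 0 = S 0 n = 1/(q;q)_n`,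
and the theorem is `S n 0` divided by `(q;q)_n`. -/

theorem Finset.sum_range_add_two_of_pascal {M : Type*} [AddCommMonoid M] (f A B : ℕ → M)
    (n : ℕ) (h_zero : f 0 = A 0) (h_top : f (n + 1) = B n)
    (h_mid : ∀ j < n, f (j + 1) = A (j + 1) + B j) :
    ∑ k ∈ range (n + 2), f k = ∑ k ∈ range (n + 1), A k + ∑ k ∈ range (n + 1), B k := by
  rw [sum_range_succ' f (n + 1), sum_range_succ (fun j => f (j + 1)) n,
    sum_range_succ' A n, sum_range_succ B n, h_zero, h_top,
    sum_congr rfl fun j hj => h_mid j (mem_range.mp hj), sum_add_distrib]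
  abel

theorem qp_zero (x q : ℂ) : qp x q 0 = 1 := prod_range_zero _

theorem qp_self_succ (q : ℂ) (n : ℕ) : qp q q (n + 1) = qp q q n * (1 - q ^ (n + 1)) := by
  rw [qp, qp, prod_range_succ, pow_succ']

theorem qp_self_ne_zero {q : ℂ} (hq : ‖q‖ < 1) (n : ℕ) : qp q q n ≠ 0 := by
  refine prod_ne_zero_iff.mpr fun j _ => sub_ne_zero.mpr fun h => ?_
  have : ‖q * q ^ j‖ < 1 := by
    rw [← pow_succ', norm_pow]
    exact pow_lt_one₀ (norm_nonneg q) hq j.succ_ne_zero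
  simp [← h] at this

section qbinom

variable {q : ℂ} (hq : ∀ n, qp q q n ≠ 0)
include hq

theorem one_sub_pow_succ_ne_zero (n : ℕ) : 1 - q ^ (n + 1) ≠ 0 :=
  right_ne_zero_of_mul (qp_self_succ q n ▸ hq (n + 1))

theorem qbinom_zero_right (n : ℕ) : qbinom q n 0 = 1 := by
  rw [qbinom, qp_zero, one_mul, Nat.sub_zero, div_self (hq n)]

theorem qbinom_self (n : ℕ) : qbinom q n n = 1 := by
  rw [qbinom, Nat.sub_self, qp_zero, mul_one, div_self (hq n)]

theorem qbinom_succ_succ {n k : ℕ} (hk : k < n) :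
    qbinom q (n + 1) (k + 1) = q ^ (k + 1) * qbinom q n (k + 1) + qbinom q n k := by
  obtain ⟨b, rfl⟩ : ∃ b, n = k + b + 1 := ⟨n - k - 1, by omega⟩
  rw [qbinom, qbinom, qbinom, show k + b + 1 + 1 - (k + 1) = b + 1 by omega,
    show k + b + 1 - (k + 1) = b by omega, show k + b + 1 - k = b + 1 by omega,
    qp_self_succ q (k + b + 1), qp_self_succ q k, qp_self_succ q b]
  have := hq k; have := hq b; have := hq (k + b + 1)
  have := one_sub_pow_succ_ne_zero hq k; have := one_sub_pow_succ_ne_zero hq b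
  field_simp
  ring

end qbinom

noncomputable def durfeeSum (q : ℂ) (n m : ℕ) : ℂ :=
  ∑ k ∈ range (n + 1), qbinom q n k * q ^ (k ^ 2 + m * k) / qp q q (k + m)

section durfeeSum

variable {q : ℂ} (hq : ∀ n, qp q q n ≠ 0)
include hq

theorem durfeeSum_succ_left (n m : ℕ) : durfeeSum q (n + 1) m = durfeeSum q n (m + 1) := by
  have h_split : durfeeSum q (n + 1) m
      = ∑ k ∈ range (n + 1), q ^ k * qbinom q n k * q ^ (k ^ 2 + m * k) / qp q q (k + m)
        + ∑ k ∈ range (n + 1),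
            qbinom q n k * q ^ ((k + 1) ^ 2 + m * (k + 1)) / qp q q (k + 1 + m) := by
    apply sum_range_add_two_of_pascal
    · simp only [qbinom_zero_right hq, pow_zero, one_mul]
    · rw [qbinom_self hq, qbinom_self hq]
    · intro j hj
      rw [qbinom_succ_succ hq hj]
      ring
  rw [h_split, durfeeSum, ← sum_add_distrib]
  refine sum_congr rfl fun k _ => ?_
  rw [add_right_comm k 1 m, ← add_assoc, qp_self_succ]
  have := hq (k + m); have := one_sub_pow_succ_ne_zero hq (k + m)
  field_simp
  ring

theorem durfeeSum_eq (n m : ℕ) : durfeeSum q n m = 1 / qp q q (n + m) := by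
  induction n generalizing m with
  | zero => simp [durfeeSum, qbinom_zero_right hq]
  | succ n ih => rw [durfeeSum_succ_left hq, ih, add_right_comm, add_assoc]

end durfeeSum

theorem stmt19_general (q : ℂ) (hq : ‖q‖ < 1) (n : ℕ) :
    ∑ k ∈ Finset.range (n + 1), q ^ (k ^ 2) / ((qp q q k) ^ 2 * qp q q (n - k))
      = 1 / (qp q q n) ^ 2 := by
  have hqp := qp_self_ne_zero hq
  have h_term : ∀ k ∈ range (n + 1), q ^ (k ^ 2) / ((qp q q k) ^ 2 * qp q q (n - k))
      = 1 / qp q q n * (qbinom q n k * q ^ (k ^ 2 + 0 * k) / qp q q (k + 0)) := by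
    intro k _
    have := hqp k; have := hqp (n - k); have := hqp n
    rw [qbinom, zero_mul, add_zero, add_zero]
    field_simp
  rw [sum_congr rfl h_term, ← mul_sum, ← durfeeSum, durfeeSum_eq hqp, add_zero]
  ring

theorem stmt19 (q : ℂ) (hq0 : q ≠ 0) (hq : ‖q‖ < 1) (n : ℕ) :
    ∑ k ∈ Finset.range (n + 1), q ^ (k ^ 2) / ((qp q q k) ^ 2 * qp q q (n - k))
      = 1 / (qp q q n) ^ 2 :=
  stmt19_general q hq n
end
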